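/- arXiv:2505.18529 — 3 statements merged into one kernel-verified Lean document; each statement's English description precedes it below -/
import Mathlib

section
/- Fix T > 0 and m ∈ ℝ. Define u : [0,T] × ℝ → ℝ by u(t,x) = ((e^{2T−t} − e^t) / (2(e^{2T−t} + e^t))) (x − m)². Then u solves the first-order Hamilton–Jacobi equation −∂_t u + (1/2)(∂_x u)² − (1/2)(x − m)² = 0 on [0,T] × ℝ with terminal condition u(T, x) = 0. -/
open Real Set

/-! The coefficient `φ(t) = (e^{2T-t} - e^t) / (2(e^{2T-t} + e^t)) = tanh(T - t) / 2` vanishes at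
`t = T` and solves the Riccati equation `φ' = 2φ² - 1/2`. For a quadratic ansatz
`u(t,x) = φ(t)(x - m)²` the Hamilton–Jacobi residual is `(-φ' + 2φ² - 1/2)(x - m)²`, so the
Riccati equation is exactly what makes `u` a solution. -/

noncomputable def riccatiCoeff (T t : ℝ) : ℝ :=
  (exp (2 * T - t) - exp t) / (2 * (exp (2 * T - t) + exp t))

lemma riccatiCoeff_self (T : ℝ) : riccatiCoeff T T = 0 := by
  simp [riccatiCoeff, two_mul]

lemma hasDerivAt_riccatiCoeff (T t : ℝ) :
    HasDerivAt (riccatiCoeff T) (2 * riccatiCoeff T t ^ 2 - 1 / 2) t := by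
  have hexp_rev : HasDerivAt (fun τ => exp (2 * T - τ)) (-exp (2 * T - t)) t := by
    simpa using ((hasDerivAt_id t).const_sub (2 * T)).exp
  have hquot := (hexp_rev.fun_sub (hasDerivAt_exp t)).fun_div
    ((hexp_rev.fun_add (hasDerivAt_exp t)).const_mul 2) (by positivity)
  refine hquot.congr_deriv ?_
  rw [riccatiCoeff]
  field_simp
  ring

lemma deriv_mul_sub_sq (c m x : ℝ) : deriv (fun y => c * (y - m) ^ 2) x = c * (2 * (x - m)) := by
  have hsq : HasDerivAt (fun y : ℝ => (y - m) ^ 2) (2 * (x - m)) x := by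
    simpa using ((hasDerivAt_id x).sub_const m).fun_pow 2
  exact (hsq.const_mul c).deriv

lemma hj_residual_eq_zero_of_riccati {φ : ℝ → ℝ} {t : ℝ}
    (hφ : HasDerivAt φ (2 * φ t ^ 2 - 1 / 2) t) (m x : ℝ) :
    -deriv (fun τ => φ τ * (x - m) ^ 2) t
        + (1 / 2) * deriv (fun y => φ t * (y - m) ^ 2) x ^ 2 - (1 / 2) * (x - m) ^ 2 = 0 := by
  rw [(hφ.mul_const _).deriv, deriv_mul_sub_sq]
  ring

theorem closed_form_first_order_HJ_general
    (T : ℝ) (m : ℝ)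
    (u : ℝ → ℝ → ℝ)
    (hu : ∀ t x, u t x =
      (Real.exp (2 * T - t) - Real.exp t) / (2 * (Real.exp (2 * T - t) + Real.exp t))
        * (x - m) ^ 2) :
    (∀ t ∈ Icc (0:ℝ) T, ∀ x : ℝ,
      -(deriv (fun τ => u τ x) t) + (1 / 2) * (deriv (fun y => u t y) x) ^ 2
        - (1 / 2) * (x - m) ^ 2 = 0) ∧
    ∀ x : ℝ, u T x = 0 := by
  obtain rfl : u = fun t x => riccatiCoeff T t * (x - m) ^ 2 := funext₂ hu
  exact ⟨fun t _ x => hj_residual_eq_zero_of_riccati (hasDerivAt_riccatiCoeff T t) m x,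
    fun x => by simp [riccatiCoeff_self]⟩

/-- The function `u(t,x) = ((e^{2T-t} - e^t)/(2(e^{2T-t} + e^t))) (x-m)²` solves the
first-order HJ equation `-∂ₜu + (1/2)(∂ₓu)² - (1/2)(x-m)² = 0` with `u(T,·) = 0`. -/
theorem closed_form_first_order_HJ
    (T : ℝ) (hT : 0 < T) (m : ℝ)
    (u : ℝ → ℝ → ℝ)
    (hu : ∀ t x, u t x =
      (Real.exp (2 * T - t) - Real.exp t) / (2 * (Real.exp (2 * T - t) + Real.exp t))
        * (x - m) ^ 2) :
    (∀ t ∈ Icc (0:ℝ) T, ∀ x : ℝ,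
      -(deriv (fun τ => u τ x) t) + (1 / 2) * (deriv (fun y => u t y) x) ^ 2
        - (1 / 2) * (x - m) ^ 2 = 0) ∧
    ∀ x : ℝ, u T x = 0 :=
  closed_form_first_order_HJ_general T m u hu
end

section
/- Fix T > 0, m ∈ ℝ, d ∈ ℕ, and β ≥ 0. Define u^β : [0,T] × ℝ^d → ℝ by u^β(t,x) = ((e^{2T−t} − e^t)/(2(e^{2T−t} + e^t))) ‖x − m𝟙‖² − (β² d / 2) · ln(2e^T / (e^{2T−t} + e^t)). Then u^β solves −∂_t u^β + (1/2)‖∇u^β‖² − (1/2)‖x − m𝟙‖² = (β²/2) Δu^β on [0,T] × ℝ^d with u^β(T,x) = 0. -/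
open Real Set

/-- The Laplacian of `f : ℝ^d → ℝ`, as the sum of the second derivatives along the
standard coordinate directions. -/
noncomputable def laplacian {d : ℕ} (f : EuclideanSpace ℝ (Fin d) → ℝ)
    (x : EuclideanSpace ℝ (Fin d)) : ℝ :=
  ∑ i : Fin d,
    fderiv ℝ (fun y => fderiv ℝ f y (EuclideanSpace.single i (1:ℝ))) x
      (EuclideanSpace.single i (1:ℝ))

/-!
Writing `c = m𝟙`, the function is `u(t,x) = a(t) ‖x - c‖² + k(t)` with `a(t) = tanh (T - t) / 2`
and `k(t) = (β²d/2) log cosh (T - t)`. For such a quadratic ansatz `∇u = 2a (x - c)` and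
`Δu = 2ad`, so the HJB equation reduces to the Riccati equation `a' = 2a² - 1/2` together with
`k' = -β²d a`; both follow from `tanh' = 1 - tanh²` and `(log cosh)' = tanh`.
-/

open scoped RealInnerProductSpace

section QuadraticPotential

variable {E : Type*} [NormedAddCommGroup E] [InnerProductSpace ℝ E]

theorem hasFDerivAt_quadratic (a k : ℝ) (c x : E) :
    HasFDerivAt (fun y => a * ‖y - c‖ ^ 2 + k) ((2 * a) • innerSL ℝ (x - c)) x := by
  refine ((((hasFDerivAt_id x).sub_const c).norm_sq.const_mul a).add_const k).congr_fderiv ?_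
  ext v
  simp only [id_eq, map_sub, ContinuousLinearMap.comp_id, smul_apply,
    sub_apply, coe_innerSL_apply, nsmul_eq_mul, Nat.cast_ofNat, smul_eq_mul]
  ring

theorem fderiv_quadratic_apply (a k : ℝ) (c x v : E) :
    fderiv ℝ (fun y => a * ‖y - c‖ ^ 2 + k) x v = 2 * a * ⟪x - c, v⟫ := by
  rw [(hasFDerivAt_quadratic a k c x).fderiv]
  rfl

theorem gradient_quadratic [CompleteSpace E] (a k : ℝ) (c x : E) :
    gradient (fun y => a * ‖y - c‖ ^ 2 + k) x = (2 * a) • (x - c) := by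
  refine HasGradientAt.gradient ?_
  rw [hasGradientAt_iff_hasFDerivAt]
  refine (hasFDerivAt_quadratic a k c x).congr_fderiv ?_
  ext v
  simp

theorem fderiv_fderiv_quadratic_apply (a k : ℝ) (c x v : E) :
    fderiv ℝ (fun y => fderiv ℝ (fun y => a * ‖y - c‖ ^ 2 + k) y v) x v = 2 * a * ‖v‖ ^ 2 := by
  have h_affine : (fun y => fderiv ℝ (fun y => a * ‖y - c‖ ^ 2 + k) y v)
      = fun y => 2 * a * (innerSL ℝ v y - ⟪v, c⟫) := by
    funext y
    rw [fderiv_quadratic_apply, innerSL_apply_apply, ← inner_sub_right, real_inner_comm]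
  rw [h_affine, (((innerSL ℝ v).hasFDerivAt.sub_const _).const_mul (2 * a)).fderiv]
  simp

end QuadraticPotential

theorem laplacian_quadratic {d : ℕ} (a k : ℝ) (c x : EuclideanSpace ℝ (Fin d)) :
    laplacian (fun y => a * ‖y - c‖ ^ 2 + k) x = 2 * a * d := by
  simp only [laplacian, fderiv_fderiv_quadratic_apply]
  simp [mul_comm]

theorem quadratic_ansatz_solves_HJB {d : ℕ} (β : ℝ) {a k : ℝ → ℝ} {a' k' t : ℝ}
    (ha : HasDerivAt a a' t) (hk : HasDerivAt k k' t)
    (hriccati : a' = 2 * a t ^ 2 - 1 / 2) (hk' : k' = -(β ^ 2 * d * a t))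
    (c x : EuclideanSpace ℝ (Fin d)) :
    -(deriv (fun τ => a τ * ‖x - c‖ ^ 2 + k τ) t)
        + (1 / 2) * ‖gradient (fun y => a t * ‖y - c‖ ^ 2 + k t) x‖ ^ 2
        - (1 / 2) * ‖x - c‖ ^ 2
      = (β ^ 2 / 2) * laplacian (fun y => a t * ‖y - c‖ ^ 2 + k t) x := by
  have hu : HasDerivAt (fun τ => a τ * ‖x - c‖ ^ 2 + k τ) (a' * ‖x - c‖ ^ 2 + k') t :=
    (ha.mul_const _).add hk
  rw [hu.deriv, gradient_quadratic, laplacian_quadratic, norm_smul,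
    mul_pow, Real.norm_eq_abs, sq_abs, hriccati, hk']
  ring

theorem Real.hasDerivAt_tanh (x : ℝ) : HasDerivAt tanh (1 - tanh x ^ 2) x := by
  have h := (hasDerivAt_sinh x).div (hasDerivAt_cosh x) (cosh_pos x).ne'
  rw [show sinh / cosh = tanh by funext y; exact (tanh_eq_sinh_div_cosh y).symm] at h
  refine h.congr_deriv ?_
  rw [tanh_eq_sinh_div_cosh]
  field_simp

theorem Real.hasDerivAt_log_cosh (x : ℝ) : HasDerivAt (fun y => log (cosh y)) (tanh x) x :=
  ((hasDerivAt_cosh x).log (cosh_pos x).ne').congr_deriv (tanh_eq_sinh_div_cosh x).symm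

theorem exp_two_mul_sub_add_exp (T t : ℝ) :
    exp (2 * T - t) + exp t = 2 * exp T * cosh (T - t) := by
  rw [cosh_eq, mul_div_left_comm, mul_div_cancel_left₀ _ two_ne_zero, add_mul, ← exp_add,
    ← exp_add]
  ring_nf

theorem exp_two_mul_sub_sub_exp (T t : ℝ) :
    exp (2 * T - t) - exp t = 2 * exp T * sinh (T - t) := by
  rw [sinh_eq, mul_div_left_comm, mul_div_cancel_left₀ _ two_ne_zero, sub_mul, ← exp_add,
    ← exp_add]
  ring_nf

theorem closed_form_viscous_HJB_general
    (T : ℝ) (d : ℕ) (β : ℝ)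
    (mOne : EuclideanSpace ℝ (Fin d))
    (uβ : ℝ → EuclideanSpace ℝ (Fin d) → ℝ)
    (huβ : ∀ t x, uβ t x =
      (Real.exp (2 * T - t) - Real.exp t) / (2 * (Real.exp (2 * T - t) + Real.exp t))
        * ‖x - mOne‖ ^ 2
      - (β ^ 2 * d / 2) *
        Real.log (2 * Real.exp T / (Real.exp (2 * T - t) + Real.exp t))) :
    (∀ t ∈ Icc (0:ℝ) T, ∀ x : EuclideanSpace ℝ (Fin d),
      -(deriv (fun τ => uβ τ x) t) + (1 / 2) * ‖gradient (uβ t) x‖ ^ 2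
        - (1 / 2) * ‖x - mOne‖ ^ 2
      = (β ^ 2 / 2) * laplacian (uβ t) x) ∧
    ∀ x : EuclideanSpace ℝ (Fin d), uβ T x = 0 := by
  have hu : uβ = fun t x =>
      tanh (T - t) / 2 * ‖x - mOne‖ ^ 2 + β ^ 2 * d / 2 * log (cosh (T - t)) := by
    funext t x
    rw [huβ, exp_two_mul_sub_add_exp, exp_two_mul_sub_sub_exp, tanh_eq_sinh_div_cosh,
      show 2 * exp T / (2 * exp T * cosh (T - t)) = (cosh (T - t))⁻¹ by field_simp, log_inv]
    field_simp
    ring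
  subst hu
  refine ⟨fun t _ x => ?_, fun x => by simp⟩
  have h_reflect : HasDerivAt (fun τ => T - τ) (-1) t := by
    simpa using (hasDerivAt_id t).const_sub T
  exact quadratic_ansatz_solves_HJB β (a := fun τ => tanh (T - τ) / 2)
    (k := fun τ => β ^ 2 * d / 2 * log (cosh (T - τ)))
    (((hasDerivAt_tanh (T - t)).comp t h_reflect).div_const 2)
    (((hasDerivAt_log_cosh (T - t)).comp t h_reflect).const_mul _) (by ring) (by ring) mOne x

/-- The function
`u^β(t,x) = ((e^{2T-t}-e^t)/(2(e^{2T-t}+e^t)))‖x - m𝟙‖² - (β²d/2) ln(2e^T/(e^{2T-t}+e^t))`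
solves the viscous HJB equation
`-∂ₜu + (1/2)‖∇u‖² - (1/2)‖x - m𝟙‖² = (β²/2) Δu` with `u(T,·) = 0`. -/
theorem closed_form_viscous_HJB
    (T : ℝ) (hT : 0 < T) (m : ℝ) (d : ℕ) (β : ℝ) (hβ : 0 ≤ β)
    (mOne : EuclideanSpace ℝ (Fin d)) (hmOne : ∀ i, mOne i = m)
    (uβ : ℝ → EuclideanSpace ℝ (Fin d) → ℝ)
    (huβ : ∀ t x, uβ t x =
      (Real.exp (2 * T - t) - Real.exp t) / (2 * (Real.exp (2 * T - t) + Real.exp t))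
        * ‖x - mOne‖ ^ 2
      - (β ^ 2 * d / 2) *
        Real.log (2 * Real.exp T / (Real.exp (2 * T - t) + Real.exp t))) :
    (∀ t ∈ Icc (0:ℝ) T, ∀ x : EuclideanSpace ℝ (Fin d),
      -(deriv (fun τ => uβ τ x) t) + (1 / 2) * ‖gradient (uβ t) x‖ ^ 2
        - (1 / 2) * ‖x - mOne‖ ^ 2
      = (β ^ 2 / 2) * laplacian (uβ t) x) ∧
    ∀ x : EuclideanSpace ℝ (Fin d), uβ T x = 0 :=
  closed_form_viscous_HJB_general T d β mOne uβ huβ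
end

section
/- With u^β and u = u⁰ as in the linear-quadratic example (u^β(t,x) = ((e^{2T−t}−e^t)/(2(e^{2T−t}+e^t)))‖x−m𝟙‖² − (β²d/2)·ln(2e^T/(e^{2T−t}+e^t))), we have sup_{(t,x) ∈ [0,T]×ℝ^d} |u^β(t,x) − u(t,x)| = (β² d / 2) · ln((e^T + e^{−T})/2) ≤ (β² d T)/2. In particular ‖u^β − u‖_∞ = O(β²) as β → 0. -/
open Real Set

/-- For the closed-form linear–quadratic example, the sup-norm distance between the
viscous solution `u^β` and the inviscid solution `u = u⁰` equals
`(β²d/2) ln((e^T + e^{-T})/2)`, which is at most `β²dT/2`; hence `‖u^β - u‖_∞ = O(β²)`. -/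
theorem closed_form_viscosity_rate
    (T : ℝ) (hT : 0 < T) (m : ℝ) (d : ℕ) (hd : 0 < d) (β : ℝ) (hβ : 0 < β)
    (mOne : EuclideanSpace ℝ (Fin d)) (hmOne : ∀ i, mOne i = m)
    (uβ u : ℝ → EuclideanSpace ℝ (Fin d) → ℝ)
    (huβ : ∀ t x, uβ t x =
      (Real.exp (2 * T - t) - Real.exp t) / (2 * (Real.exp (2 * T - t) + Real.exp t))
        * ‖x - mOne‖ ^ 2
      - (β ^ 2 * d / 2) *
        Real.log (2 * Real.exp T / (Real.exp (2 * T - t) + Real.exp t)))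
    (hu : ∀ t x, u t x =
      (Real.exp (2 * T - t) - Real.exp t) / (2 * (Real.exp (2 * T - t) + Real.exp t))
        * ‖x - mOne‖ ^ 2) :
    sSup { v : ℝ | ∃ t ∈ Icc (0:ℝ) T, ∃ x : EuclideanSpace ℝ (Fin d),
        v = |uβ t x - u t x| }
      = (β ^ 2 * d / 2) * Real.log ((Real.exp T + Real.exp (-T)) / 2) ∧
    (β ^ 2 * d / 2) * Real.log ((Real.exp T + Real.exp (-T)) / 2) ≤ β ^ 2 * d * T / 2 := by
  have hd' : (0:ℝ) < d := by exact_mod_cast hd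
  set c := β ^ 2 * (d:ℝ) / 2 with hc
  have hcpos : 0 < c := by positivity
  -- the difference is spatially constant
  have key : ∀ t (x : EuclideanSpace ℝ (Fin d)), uβ t x - u t x =
      c * Real.log ((Real.exp (2*T-t) + Real.exp t) / (2 * Real.exp T)) := by
    intro t x
    have h1 : (0:ℝ) < Real.exp (2*T-t) + Real.exp t := by positivity
    have h2 : (0:ℝ) < 2 * Real.exp T := by positivity
    rw [huβ, hu, Real.log_div h2.ne' h1.ne', Real.log_div h1.ne' h2.ne']
    ring_nf
  have hge1 : ∀ t, (1:ℝ) ≤ (Real.exp (2*T-t) + Real.exp t) / (2 * Real.exp T) := by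
    intro t
    rw [le_div_iff₀ (by positivity)]
    have e1 : Real.exp (2*T-t) * Real.exp t = Real.exp T * Real.exp T := by
      rw [← Real.exp_add, ← Real.exp_add]; ring_nf
    nlinarith [sq_nonneg (Real.exp (2*T-t) - Real.exp t), Real.exp_pos t,
      Real.exp_pos (2*T-t), Real.exp_pos T]
  have hr0 : (Real.exp (2*T-0) + Real.exp 0) / (2 * Real.exp T)
      = (Real.exp T + Real.exp (-T)) / 2 := by
    have e1 : Real.exp (2*T-0) = Real.exp T * Real.exp T := by
      rw [← Real.exp_add]; ring_nf
    have e2 : Real.exp (-T) * Real.exp T = 1 := by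
      rw [← Real.exp_add]; simp
    rw [Real.exp_zero, e1]
    field_simp
    nlinarith [Real.exp_pos T]
  have hmono : ∀ t ∈ Icc (0:ℝ) T,
      (Real.exp (2*T-t) + Real.exp t) / (2 * Real.exp T)
        ≤ (Real.exp T + Real.exp (-T)) / 2 := by
    intro t ht
    rw [div_le_div_iff₀ (by positivity) (by positivity)]
    have e1 : Real.exp (2*T-t) * Real.exp t = Real.exp T * Real.exp T := by
      rw [← Real.exp_add, ← Real.exp_add]; ring_nf
    have e2 : Real.exp (-T) * Real.exp T = 1 := by
      rw [← Real.exp_add]; simp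
    have hA1 : (1:ℝ) ≤ Real.exp t := Real.one_le_exp ht.1
    have hAB : Real.exp t ≤ Real.exp T := Real.exp_le_exp.mpr ht.2
    have hT1 : (1:ℝ) ≤ Real.exp T := Real.one_le_exp hT.le
    nlinarith [Real.exp_pos t, Real.exp_pos T, Real.exp_pos (2*T-t),
      mul_nonneg (sub_nonneg.mpr hA1)
        (show (0:ℝ) ≤ Real.exp T * Real.exp T - Real.exp t by nlinarith)]
  set M := c * Real.log ((Real.exp T + Real.exp (-T)) / 2) with hM
  have habs : ∀ t (x : EuclideanSpace ℝ (Fin d)), |uβ t x - u t x| =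
      c * Real.log ((Real.exp (2*T-t) + Real.exp t) / (2 * Real.exp T)) := by
    intro t x
    rw [key t x, abs_of_nonneg]
    exact mul_nonneg hcpos.le (Real.log_nonneg (hge1 t))
  have hgreat : IsGreatest { v : ℝ | ∃ t ∈ Icc (0:ℝ) T, ∃ x : EuclideanSpace ℝ (Fin d),
      v = |uβ t x - u t x| } M := by
    constructor
    · refine ⟨0, ⟨le_refl _, hT.le⟩, mOne, ?_⟩
      rw [habs 0 mOne, hr0]
    · rintro v ⟨t, ht, x, rfl⟩
      rw [habs t x]
      exact mul_le_mul_of_nonneg_left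
        (Real.log_le_log (by linarith [hge1 t]) (hmono t ht)) hcpos.le
  refine ⟨hgreat.csSup_eq, ?_⟩
  have hlog : Real.log ((Real.exp T + Real.exp (-T)) / 2) ≤ T := by
    have h1 : (Real.exp T + Real.exp (-T)) / 2 ≤ Real.exp T := by
      have := Real.exp_le_exp.mpr (show -T ≤ T by linarith)
      linarith
    calc Real.log ((Real.exp T + Real.exp (-T)) / 2)
        ≤ Real.log (Real.exp T) := Real.log_le_log (by positivity) h1
      _ = T := Real.log_exp T
  calc c * Real.log ((Real.exp T + Real.exp (-T)) / 2) ≤ c * T :=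
        mul_le_mul_of_nonneg_left hlog hcpos.le
    _ = β ^ 2 * d * T / 2 := by ring
end
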